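/- arXiv:math/0402458 — 5 statements merged into one kernel-verified Lean document; each statement's English description precedes it below -/
import Mathlib

section
/- For every integer k ≥ 9, setting n = 2^k - 2^{k-2} - 2^{k-3} - 4, each of the four consecutive integers n, n+1, n+2, n+3 satisfies B(m) = B(m^2). Hence there are infinitely many 4-tuples of consecutive integers all of which are (2,1,2)-numbers. -/
/-!
Write `m = 10 * 2 ^ j - r` with `1 ≤ r ≤ 4`. In binary `m` is `10` followed by the `j + 1`-bit
complement of `r - 1`, and `m ^ 2 = r ^ 2 + 2 ^ (j + 2) * (24 * 2 ^ j + (2 ^ j - 5 * r))` is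
`r ^ 2` below `11` followed by the `j`-bit complement of `5 * r - 1`. Since the `j`-bit complement
of `x` has `j - B x` ones, `B m = B (m ^ 2)` reduces to `B (r - 1) + B (r ^ 2) = B (5 * r - 1)`,
which holds for `r = 1, 2, 3, 4`. For `k ≥ 9` the given `n` is `10 * 2 ^ (k - 4) - 4`.
-/

def B (n : ℕ) : ℕ := (Nat.digits 2 n).sum

lemma B_eq_mod_add_B_div (n : ℕ) : B n = n % 2 + B (n / 2) := by
  rcases Nat.eq_zero_or_pos n with rfl | hn
  · simp [B]
  · rw [B, Nat.digits_def' (by norm_num) hn, List.sum_cons, B]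

lemma B_add_two_pow_mul {a e : ℕ} (b : ℕ) (h : a < 2 ^ e) : B (a + 2 ^ e * b) = B a + B b := by
  induction e generalizing a with
  | zero =>
    obtain rfl : a = 0 := by simpa using h
    simp [B]
  | succ e ih =>
    rw [pow_succ] at h
    rw [pow_succ, mul_right_comm]
    have hdiv : (a + 2 ^ e * b * 2) / 2 = a / 2 + 2 ^ e * b := by omega
    rw [B_eq_mod_add_B_div (a + _), B_eq_mod_add_B_div a, hdiv, ih (by omega)]
    omega

lemma B_two_pow_sub_add_B_pred {r : ℕ} (j : ℕ) (hr : 0 < r) (h : r ≤ 2 ^ j) :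
    B (2 ^ j - r) + B (r - 1) = j := by
  induction j generalizing r with
  | zero =>
    obtain rfl : r = 1 := by omega
    simp [B]
  | succ j ih =>
    -- the low bits of `2 ^ (j + 1) - r` and `r - 1` are complementary
    rw [pow_succ] at h ⊢
    have hhigh : (2 ^ j * 2 - r) / 2 = 2 ^ j - ((r - 1) / 2 + 1) := by omega
    rw [B_eq_mod_add_B_div (2 ^ j * 2 - r), B_eq_mod_add_B_div (r - 1), hhigh]
    have := ih (r := (r - 1) / 2 + 1) (by omega) (by omega)
    rw [Nat.add_sub_cancel] at this
    omega

lemma B_ten_mul_two_pow_sub_add_B_pred {r : ℕ} (j : ℕ) (hr : 0 < r) (h : r ≤ 2 ^ (j + 1)) :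
    B (10 * 2 ^ j - r) + B (r - 1) = j + 2 := by
  have hsplit : 10 * 2 ^ j - r = (2 ^ (j + 1) - r) + 2 ^ (j + 1) * 4 := by
    rw [pow_succ]; omega
  rw [hsplit, B_add_two_pow_mul _ (by omega), add_right_comm,
    B_two_pow_sub_add_B_pred _ hr h]
  norm_num [B]

lemma B_sq_ten_mul_two_pow_sub_add_B {r : ℕ} (j : ℕ) (hr : 0 < r) (h5 : 5 * r ≤ 2 ^ j)
    (hsq : r ^ 2 < 2 ^ (j + 2)) :
    B ((10 * 2 ^ j - r) ^ 2) + B (5 * r - 1) = B (r ^ 2) + (j + 2) := by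
  have hsplit : (10 * 2 ^ j - r) ^ 2 = r ^ 2 + 2 ^ (j + 2) * ((2 ^ j - 5 * r) + 2 ^ j * 24) := by
    zify [(by omega : r ≤ 10 * 2 ^ j), h5]
    ring
  rw [hsplit, B_add_two_pow_mul _ hsq, B_add_two_pow_mul _ (by omega)]
  have hcompl := B_two_pow_sub_add_B_pred j (by omega) h5
  have h24 : B 24 = 2 := by norm_num [B]
  omega

lemma B_sq_eq_B_of_ten_mul_two_pow_sub_four_le {j m : ℕ} (hj : 5 ≤ j)
    (hlo : 10 * 2 ^ j - 4 ≤ m) (hhi : m < 10 * 2 ^ j) : B m = B (m ^ 2) := by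
  have h32 : 32 ≤ 2 ^ j := le_trans (by norm_num) (Nat.pow_le_pow_right two_pos hj)
  obtain ⟨r, hr, hr4, rfl⟩ : ∃ r, 0 < r ∧ r ≤ 4 ∧ m = 10 * 2 ^ j - r :=
    ⟨10 * 2 ^ j - m, by omega, by omega, by omega⟩
  have hm := B_ten_mul_two_pow_sub_add_B_pred j hr (by rw [pow_succ]; omega)
  have hsq := B_sq_ten_mul_two_pow_sub_add_B j hr (by omega)
    (by rw [pow_add]; nlinarith)
  have hsmall : B (r - 1) + B (r ^ 2) = B (5 * r - 1) := by
    interval_cases r <;> norm_num [B]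
  omega

theorem stmt_2 :
    (∀ k : ℕ, 9 ≤ k → ∀ m : ℕ, 2 ^ k - 2 ^ (k - 2) - 2 ^ (k - 3) - 4 ≤ m →
      m ≤ 2 ^ k - 2 ^ (k - 2) - 2 ^ (k - 3) - 4 + 3 → B m = B (m ^ 2)) ∧
    {n : ℕ | 0 < n ∧ ∀ m : ℕ, n ≤ m → m ≤ n + 3 → B m = B (m ^ 2)}.Infinite := by
  have h32 : ∀ j, 32 ≤ 2 ^ (j + 5) := fun j =>
    le_trans (by norm_num) (Nat.pow_le_pow_right two_pos (Nat.le_add_left 5 j))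
  constructor
  · intro k hk m hlo hhi
    obtain ⟨j, rfl⟩ : ∃ j, k = j + 9 := ⟨k - 9, by omega⟩
    have hn : 2 ^ (j + 9) - 2 ^ (j + 9 - 2) - 2 ^ (j + 9 - 3) - 4 = 10 * 2 ^ (j + 5) - 4 := by
      simp only [show j + 9 - 2 = j + 7 by omega, show j + 9 - 3 = j + 6 by omega, pow_succ]
      omega
    have := h32 j
    exact B_sq_eq_B_of_ten_mul_two_pow_sub_four_le (j := j + 5) (by omega) (by omega) (by omega)
  · have hmono : StrictMono fun j => 10 * 2 ^ (j + 5) - 4 := strictMono_nat_of_lt_succ fun j => by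
      have := h32 j
      simp only [pow_succ] at this ⊢
      omega
    refine Set.infinite_of_injective_forall_mem hmono.injective fun j => ⟨?_, fun m hlo hhi => ?_⟩
    · have := h32 j
      omega
    · have := h32 j
      exact B_sq_eq_B_of_ten_mul_two_pow_sub_four_le (j := j + 5) (by omega) hlo (by omega)
end

section
/- For every positive integer k, there is no (2,1,2)-number m in the open interval (2^{2k}, 2^{2k} + 2^k). In particular, there are infinitely many n such that the interval (n, n + sqrt(n)) contains no (2,1,2)-number. -/
lemma B_split {a b e : ℕ} (ha : a < 2 ^ e) (hb : 0 < b) :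
    B (a + 2 ^ e * b) = B a + B b := by
  have hlen : (Nat.digits 2 a).length ≤ e := by
    rcases Nat.eq_zero_or_pos a with rfl | hapos
    · simp
    by_contra h
    push_neg at h
    have h2 : 2 ^ e < 2 ^ (Nat.digits 2 a).length :=
      Nat.pow_lt_pow_right (by norm_num) h
    have h3 := Nat.base_pow_length_digits_le 2 a (by norm_num) (by omega : a ≠ 0)
    have h4 : 2 * a < 2 * 2 ^ e := by omega
    have : 2 ^ (Nat.digits 2 a).length < 2 ^ (e + 1) := by
      calc 2 ^ (Nat.digits 2 a).length ≤ 2 * a := h3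
      _ < 2 * 2 ^ e := h4
      _ = 2 ^ (e+1) := by ring
    have := Nat.pow_lt_pow_iff_right (a := 2) (by norm_num) |>.mp this
    omega
  obtain ⟨k, hk⟩ := Nat.exists_eq_add_of_le hlen
  have := Nat.digits_append_zeroes_append_digits (b := 2) (k := k) (m := b) (n := a)
    (by norm_num) hb
  rw [← hk] at this
  unfold B
  rw [← this]
  simp [List.sum_append]

lemma B_pos {n : ℕ} (hn : 0 < n) : 0 < B n := by
  have hne : Nat.digits 2 n ≠ [] := Nat.digits_ne_nil_iff_ne_zero.mpr (by omega)
  have hmem : (Nat.digits 2 n).getLast hne ∈ Nat.digits 2 n := List.getLast_mem hne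
  have hnz : (Nat.digits 2 n).getLast hne ≠ 0 := Nat.getLast_digit_ne_zero 2 (by omega)
  have := List.single_le_sum (l := Nat.digits 2 n) (fun x _ => Nat.zero_le x) _ hmem
  unfold B
  omega

lemma key (k : ℕ) (hk : 0 < k) (m : ℕ) (h1 : 2 ^ (2*k) < m) (h2 : m < 2 ^ (2*k) + 2^k) :
    B m ≠ B (m ^ 2) := by
  set r := m - 2 ^ (2*k) with hr
  have hrpos : 0 < r := by omega
  have hrlt : r < 2 ^ k := by omega
  have hm : m = r + 2 ^ (2*k) * 1 := by omega
  have hBm : B m = B r + 1 := by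
    rw [hm, B_split (lt_of_lt_of_le hrlt (Nat.pow_le_pow_right (by norm_num) (by omega)))
      one_pos]
    simp [B]
  have hr2 : r ^ 2 < 2 ^ (2*k+1) := by
    have : r ^ 2 < 2 ^ k * 2 ^ k := by
      have := Nat.mul_lt_mul_of_lt_of_lt hrlt hrlt
      simpa [pow_two] using this
    calc r ^ 2 < 2 ^ k * 2 ^ k := this
    _ = 2 ^ (2*k) := by rw [← pow_add]; ring_nf
    _ ≤ 2 ^ (2*k+1) := Nat.pow_le_pow_right (by norm_num) (by omega)
  have hsq : m ^ 2 = r ^ 2 + 2 ^ (2*k+1) * (r + 2 ^ (2*k-1)) := by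
    have h4k : 2 ^ (2*k+1) * 2 ^ (2*k-1) = 2 ^ (2*k) * 2 ^ (2*k) := by
      rw [← pow_add, ← pow_add]; congr 1; omega
    have : m ^ 2 = r ^ 2 + 2 ^ (2*k+1) * r + 2 ^ (2*k) * 2 ^ (2*k) := by
      rw [hm]; ring_nf
    rw [this, Nat.mul_add, h4k]; ring
  have hBsq : B (m ^ 2) = B (r ^ 2) + (B r + 1) := by
    rw [hsq, B_split hr2 (by positivity)]
    congr 1
    have hrlt' : r < 2 ^ (2*k-1) :=
      lt_of_lt_of_le hrlt (Nat.pow_le_pow_right (by norm_num) (by omega))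
    have : r + 2 ^ (2*k-1) = r + 2 ^ (2*k-1) * 1 := by ring
    rw [this, B_split hrlt' one_pos]
    simp [B]
  have : 0 < B (r ^ 2) := B_pos (by positivity)
  omega

theorem stmt_3 :
    (∀ k : ℕ, 0 < k → ∀ m : ℕ, 2 ^ (2 * k) < m → m < 2 ^ (2 * k) + 2 ^ k →
      B m ≠ B (m ^ 2)) ∧
    {n : ℕ | ∀ m : ℕ, n < m → (m : ℝ) < (n : ℝ) + Real.sqrt n → B m ≠ B (m ^ 2)}.Infinite := by
  constructor
  · exact key
  · apply Set.infinite_of_injective_forall_mem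
      (f := fun k : ℕ => 2 ^ (2 * (k + 1)))
    case hi =>
      intro a b hab
      simp only at hab
      have := Nat.pow_right_injective (le_refl 2) hab
      omega
    case hf =>
      intro k m hm1 hm2
      set j := k + 1
      have hsqrt : Real.sqrt (((2 ^ (2 * j) : ℕ) : ℝ)) = 2 ^ j := by
        rw [show (((2 ^ (2*j) : ℕ)) : ℝ) = (2 ^ j : ℝ) ^ 2 by push_cast; rw [← pow_mul]; ring_nf]
        exact Real.sqrt_sq (by positivity)
      rw [hsqrt] at hm2
      have : (m : ℝ) < ((2 ^ (2*j) + 2 ^ j : ℕ) : ℝ) := by push_cast at hm2 ⊢; linarith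
      have hmlt : m < 2 ^ (2*j) + 2^j := by exact_mod_cast this
      exact key j (by omega) m hm1 hmlt
end

section
/- If n is a positive integer with n < 2^ν, then B(n·(2^ν - 1)) = ν, where B denotes the binary digit sum. -/
/-!
Write `n * (b ^ k - 1) = (b ^ k - n) + b ^ k * (n - 1)`. The first summand is below `b ^ k`, so
the digit sum splits over the two summands. Padded to `k` digits, the base-`b` digits of
`b ^ k - n = (b ^ k - 1) - (n - 1)` are the complements `b - 1 - d` of those of `n - 1`, so the two
digit sums add up to `k * (b - 1)`.
-/

namespace Nat

variable {b : ℕ}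

theorem digits_sum_add_base_mul (hb : 1 < b) {r : ℕ} (hr : r < b) (q : ℕ) :
    (b.digits (r + b * q)).sum = r + (b.digits q).sum := by
  by_cases hzero : r = 0 ∧ q = 0
  · simp [hzero]
  · rw [digits_add b hb r q hr (not_and_or.mp hzero), List.sum_cons]

theorem digits_sum_eq_mod_add_digits_sum_div (hb : 1 < b) (m : ℕ) :
    (b.digits m).sum = m % b + (b.digits (m / b)).sum := by
  rw [← digits_sum_add_base_mul hb (mod_lt m (by omega)), mod_add_div]

theorem digits_sum_add_base_pow_mul (hb : 1 < b) (a : ℕ) {k m : ℕ} (hm : m < b ^ k) :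
    (b.digits (m + b ^ k * a)).sum = (b.digits m).sum + (b.digits a).sum := by
  induction k generalizing m with
  | zero => simp_all
  | succ k ih =>
    have hdiv : m / b < b ^ k := Nat.div_lt_of_lt_mul (by rwa [← pow_succ'])
    have hmod : m % b < b := mod_lt m (by omega)
    calc (b.digits (m + b ^ (k + 1) * a)).sum
        = (b.digits (m % b + b * (m / b + b ^ k * a))).sum := by
          rw [pow_succ', mul_assoc, mul_add, ← add_assoc, mod_add_div]
      _ = m % b + ((b.digits (m / b)).sum + (b.digits a).sum) := by
          rw [digits_sum_add_base_mul hb hmod, ih hdiv]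
      _ = (b.digits m).sum + (b.digits a).sum := by
          rw [digits_sum_eq_mod_add_digits_sum_div hb m, add_assoc]

theorem digits_sum_add_digits_sum_base_pow_sub_one_sub (hb : 1 < b) {k m : ℕ} (hm : m < b ^ k) :
    (b.digits m).sum + (b.digits (b ^ k - 1 - m)).sum = k * (b - 1) := by
  induction k generalizing m with
  | zero => simp_all
  | succ k ih =>
    have hdiv : m / b < b ^ k := Nat.div_lt_of_lt_mul (by rwa [← pow_succ'])
    have hmod : m % b < b := mod_lt m (by omega)
    have hcompl : b ^ (k + 1) - 1 - m = (b - 1 - m % b) + b * (b ^ k - 1 - m / b) := by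
      obtain ⟨c, hc⟩ : ∃ c, b ^ k = m / b + 1 + c := ⟨b ^ k - (m / b + 1), by omega⟩
      have hm_eq := mod_add_div m b
      rw [pow_succ', hc, show m / b + 1 + c - 1 - m / b = c by omega, mul_add, mul_add, mul_one]
      omega
    rw [hcompl, digits_sum_add_base_mul hb (by omega), digits_sum_eq_mod_add_digits_sum_div hb m,
      succ_mul]
    have ih_m := ih hdiv
    omega

theorem digits_sum_mul_base_pow_sub_one (hb : 1 < b) {k n : ℕ} (hn : 0 < n) (hnk : n ≤ b ^ k) :
    (b.digits (n * (b ^ k - 1))).sum = k * (b - 1) := by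
  obtain ⟨c, rfl⟩ := exists_eq_add_one.mpr hn
  obtain ⟨d, hd⟩ := exists_add_of_le hnk
  have hsplit : (c + 1) * (b ^ k - 1) = (b ^ k - 1 - c) + b ^ k * c := by
    rw [hd, show c + 1 + d - 1 - c = d by omega, show c + 1 + d - 1 = c + d by omega]
    ring
  rw [hsplit, digits_sum_add_base_pow_mul hb c (by omega), add_comm,
    digits_sum_add_digits_sum_base_pow_sub_one_sub hb (by omega)]

end Nat

theorem stmt_6 (n ν : ℕ) (hn : 0 < n) (h : n < 2 ^ ν) : B (n * (2 ^ ν - 1)) = ν :=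
  (Nat.digits_sum_mul_base_pow_sub_one one_lt_two hn h.le).trans (mul_one ν)
end

section
/- Let n be a positive integer and ν an integer with n < 2^{ν-1}. Then B(2^ν·n + 1) = B(n) + 1 and B((2^ν·n + 1)^2) = B(n^2) + B(n) + 1. -/
/-
The binary expansion of `2^k * m + a` with `a < 2^k` is that of `a`, padded with zeros to length
`k`, followed by that of `m`; hence `B (2^k * m + a) = B m + B a`. Writing `ν = k + 1`, the
hypothesis says `n < 2^k`, and
`(2^(k+1) * n + 1)^2 = 2^(k+2) * (2^k * n^2 + n) + 1`,
so both identities follow by splitting off the low-order blocks `1` and then `n`.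
-/

lemma B_one : B 1 = 1 := by
  simp [B]

lemma B_two_pow_mul_add {k a : ℕ} (m : ℕ) (ha : a < 2 ^ k) :
    B (2 ^ k * m + a) = B m + B a := by
  rcases Nat.eq_zero_or_pos m with rfl | hm
  · simp [B]
  obtain ⟨j, hj⟩ := Nat.exists_eq_add_of_le ((Nat.digits_length_le_iff one_lt_two a).mpr ha)
  rw [B, add_comm, hj, ← Nat.digits_append_zeroes_append_digits one_lt_two hm]
  simp [B, add_comm]

lemma sq_two_pow_succ_mul_add_one (k n : ℕ) :
    (2 ^ (k + 1) * n + 1) ^ 2 = 2 ^ (k + 2) * (2 ^ k * n ^ 2 + n) + 1 := by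
  ring

theorem stmt_7 (n ν : ℕ) (hn : 0 < n) (h : n < 2 ^ (ν - 1)) :
    B (2 ^ ν * n + 1) = B n + 1 ∧
    B ((2 ^ ν * n + 1) ^ 2) = B (n ^ 2) + B n + 1 := by
  obtain ⟨k, rfl⟩ : ∃ k, ν = k + 1 := Nat.exists_eq_succ_of_ne_zero <| by
    rintro rfl
    simp at h
    omega
  rw [Nat.add_sub_cancel] at h
  have one_lt : ∀ j, 1 < 2 ^ (j + 1) := fun j => Nat.one_lt_two_pow j.succ_ne_zero
  refine ⟨?_, ?_⟩
  · rw [B_two_pow_mul_add n (one_lt k), B_one]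
  · rw [sq_two_pow_succ_mul_add_one, B_two_pow_mul_add _ (one_lt (k + 1)), B_one,
      B_two_pow_mul_add _ h]
end

section
/- Let n and m be odd positive integers with binary expansions of lengths k and h respectively (so 2^{k-1} ≤ n < 2^k and 2^{h-1} ≤ m < 2^h). If ν ≥ max(2h - 1, h + k + 1), then B(n·2^ν - m) = B(n) - B(m) + ν. -/
lemma Bstep (a : ℕ) : B a = a % 2 + B (a / 2) := by
  rcases Nat.eq_zero_or_pos a with h | h
  · simp [h, B]
  · rw [B, Nat.digits_def' (by norm_num : (1:ℕ) < 2) h]; rfl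

lemma Bcompl : ∀ ν a, a < 2 ^ ν → B a + B (2 ^ ν - 1 - a) = ν := by
  intro ν
  induction ν with
  | zero => intro a ha; interval_cases a; simp [B]
  | succ ν ih =>
    intro a ha
    have hp : 2 ^ (ν + 1) = 2 * 2 ^ ν := by ring
    have h1 : a / 2 < 2 ^ ν := by omega
    have hc2 : (2 ^ (ν + 1) - 1 - a) / 2 = 2 ^ ν - 1 - a / 2 := by omega
    have hcm : (2 ^ (ν + 1) - 1 - a) % 2 = 1 - a % 2 := by omega
    rw [Bstep a, Bstep (2 ^ (ν + 1) - 1 - a), hc2, hcm]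
    have := ih (a / 2) h1
    omega

lemma Bsplit : ∀ ν a b, b < 2 ^ ν → B (a * 2 ^ ν + b) = B a + B b := by
  intro ν
  induction ν with
  | zero => intro a b hb; interval_cases b; simp [B]
  | succ ν ih =>
    intro a b hb
    have hp : 2 ^ (ν + 1) = 2 * 2 ^ ν := by ring
    have hx : a * 2 ^ (ν + 1) + b = 2 * (a * 2 ^ ν) + b := by ring
    rw [hx, Bstep (2 * (a * 2 ^ ν) + b), Bstep b]
    have hm : (2 * (a * 2 ^ ν) + b) % 2 = b % 2 := by omega
    have hd : (2 * (a * 2 ^ ν) + b) / 2 = a * 2 ^ ν + b / 2 := by omega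
    rw [hm, hd, ih a (b / 2) (by omega)]
    omega

theorem stmt_8 (n m k h ν : ℕ) (hodd : Odd n) (hodd' : Odd m)
    (hk1 : 2 ^ (k - 1) ≤ n) (hk2 : n < 2 ^ k)
    (hh1 : 2 ^ (h - 1) ≤ m) (hh2 : m < 2 ^ h)
    (hν : max (2 * h - 1) (h + k + 1) ≤ ν) :
    (B (n * 2 ^ ν - m) : ℤ) = (B n : ℤ) - B m + ν := by
  have hn2 : n % 2 = 1 := Nat.odd_iff.mp hodd
  have hm2 : m % 2 = 1 := Nat.odd_iff.mp hodd'
  have hn1 : 1 ≤ n := by omega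
  have hm1 : 1 ≤ m := by omega
  have hhν : h ≤ ν := by
    have := le_trans (le_max_right (2 * h - 1) (h + k + 1)) hν; omega
  have hmν : m < 2 ^ ν := lt_of_lt_of_le hh2 (Nat.pow_le_pow_right (by norm_num) hhν)
  have hνpos : 1 ≤ 2 ^ ν := Nat.one_le_two_pow
  have hmul : (n - 1) * 2 ^ ν = n * 2 ^ ν - 2 ^ ν := by
    rw [Nat.sub_mul, one_mul]
  have hge : 2 ^ ν ≤ n * 2 ^ ν := Nat.le_mul_of_pos_left _ (by omega)
  have key : n * 2 ^ ν - m = (n - 1) * 2 ^ ν + (2 ^ ν - m) := by omega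
  rw [key, Bsplit ν (n - 1) (2 ^ ν - m) (by omega)]
  have hco := Bcompl ν (m - 1) (by omega)
  have hco' : 2 ^ ν - 1 - (m - 1) = 2 ^ ν - m := by omega
  rw [hco'] at hco
  -- B n = B (n-1) + 1, B m = B (m-1) + 1
  have hBn : B n = B (n - 1) + 1 := by
    rw [Bstep n, Bstep (n - 1), show (n - 1) / 2 = n / 2 from by omega]
    omega
  have hBm : B m = B (m - 1) + 1 := by
    rw [Bstep m, Bstep (m - 1), show (m - 1) / 2 = m / 2 from by omega]
    omega
  have hle : B (m - 1) ≤ ν := by omega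
  push_cast
  omega
end
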